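/- For every ρ* > 0 there exists a constant C > 0 depending only on ρ* such that for all integers i', j' and every v ∈ ℝ²: v·(B_C[i', j'] v) ≥ C·((i')² + (j')²)·|v|². In particular the smallest eigenvalue of the real symmetric matrix B_C[i', j'] is at least C·((i')² + (j')²). -/

import Mathlib

noncomputable section
open Real Matrix Finset

/-- counterclockwise rotation by π/2 -/
def perp (l : Fin 2 → ℝ) : Fin 2 → ℝ := ![-(l 1), l 0]

/-- triangular-lattice direction l₁ = (1/2, −√3/2) -/
def tl1 : Fin 2 → ℝ := ![1/2, -(Real.sqrt 3)/2]
/-- triangular-lattice direction l₂ = (1, 0) -/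
def tl2 : Fin 2 → ℝ := ![1, 0]
/-- triangular-lattice direction l₃ = (1/2, √3/2) -/
def tl3 : Fin 2 → ℝ := ![1/2, Real.sqrt 3 / 2]

/-- the block ρ l lᵀ + 12 l⊥ l⊥ᵀ -/
def blk (ρ : ℝ) (l : Fin 2 → ℝ) : Matrix (Fin 2) (Fin 2) ℝ :=
  ρ • vecMulVec l l + (12:ℝ) • vecMulVec (perp l) (perp l)

/-- the continuum matrix A_C[i', j'] -/
def AC (ρ : ℝ) (i j : ℤ) : Matrix (Fin 2) (Fin 2) ℝ :=
  (4 * π^2 * (i:ℝ)^2) • blk ρ tl1 + (4 * π^2 * ((i:ℝ)+(j:ℝ))^2) • blk ρ tl2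
  + (4 * π^2 * (j:ℝ)^2) • blk ρ tl3

/-- the continuum vector d_C[i', j'] -/
def dC (i j : ℤ) : Fin 2 → ℝ :=
  (24 * π) • ((i:ℝ) • perp tl1 + ((i:ℝ)+(j:ℝ)) • perp tl2 + (j:ℝ) • perp tl3)

/-- the continuum Schur complement B_C[i', j'] = A_C − (1/36) d_C d_Cᵀ -/
def BC (ρ : ℝ) (i j : ℤ) : Matrix (Fin 2) (Fin 2) ℝ :=
  AC ρ i j - (1/36 : ℝ) • vecMulVec (dC i j) (dC i j)

/-!
Write `a = i'`, `b = j'` and `t_k = l_k⊥ · v`. The quadratic form of `B_C` splits into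
`4π²ρ (a²(l₁·v)² + (a+b)²(l₂·v)² + b²(l₃·v)²)`, which is nonnegative, and the Schur part
`48π² (a²t₁² + (a+b)²t₂² + b²t₃² − (a t₁ + (a+b) t₂ + b t₃)² / 3)`.
For the three lattice directions the latter is isotropic: it equals
`24π² (a² + ab + b²) |v|²`, and `a² + ab + b² ≥ (a² + b²) / 2`, so `C = 12π²` works.
-/

theorem dotProduct_vecMulVec_self_mulVec {n R : Type*} [Fintype n] [CommSemiring R]
    (u v : n → R) : v ⬝ᵥ vecMulVec u u *ᵥ v = (u ⬝ᵥ v) ^ 2 := by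
  simp [vecMulVec_mulVec, dotProduct_comm v u, sq]

theorem dotProduct_blk_mulVec (ρ : ℝ) (l v : Fin 2 → ℝ) :
    v ⬝ᵥ blk ρ l *ᵥ v = ρ * (l ⬝ᵥ v) ^ 2 + 12 * (perp l ⬝ᵥ v) ^ 2 := by
  simp only [blk, add_mulVec, smul_mulVec, dotProduct_add, dotProduct_smul, smul_eq_mul,
    dotProduct_vecMulVec_self_mulVec]

theorem perp_tl_sum_sq_sub_sq_sum_div_three (a b : ℝ) (v : Fin 2 → ℝ) :
    a ^ 2 * (perp tl1 ⬝ᵥ v) ^ 2 + (a + b) ^ 2 * (perp tl2 ⬝ᵥ v) ^ 2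
        + b ^ 2 * (perp tl3 ⬝ᵥ v) ^ 2
      - (a * (perp tl1 ⬝ᵥ v) + (a + b) * (perp tl2 ⬝ᵥ v) + b * (perp tl3 ⬝ᵥ v)) ^ 2 / 3
      = (a ^ 2 + a * b + b ^ 2) / 2 * (v ⬝ᵥ v) := by
  have hs : √3 ^ 2 = 3 := Real.sq_sqrt (by norm_num)
  simp only [perp, tl1, tl2, tl3, dotProduct, Fin.sum_univ_two, Matrix.cons_val_zero,
    Matrix.cons_val_one]
  linear_combination v 0 ^ 2 / 4 * (a ^ 2 + b ^ 2 - (a - b) ^ 2 / 3) * hs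

theorem dotProduct_BC_mulVec (ρ : ℝ) (i j : ℤ) (v : Fin 2 → ℝ) :
    v ⬝ᵥ BC ρ i j *ᵥ v
      = 4 * π ^ 2 * ρ * ((i : ℝ) ^ 2 * (tl1 ⬝ᵥ v) ^ 2 + ((i : ℝ) + j) ^ 2 * (tl2 ⬝ᵥ v) ^ 2
          + (j : ℝ) ^ 2 * (tl3 ⬝ᵥ v) ^ 2)
        + 24 * π ^ 2 * ((i : ℝ) ^ 2 + i * j + (j : ℝ) ^ 2) * (v ⬝ᵥ v) := by
  simp only [BC, AC, dC, sub_mulVec, add_mulVec, smul_mulVec, dotProduct_sub, dotProduct_add,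
    dotProduct_smul, smul_eq_mul, dotProduct_blk_mulVec, dotProduct_vecMulVec_self_mulVec,
    add_dotProduct, smul_dotProduct]
  linear_combination 48 * π ^ 2 * perp_tl_sum_sq_sub_sq_sum_div_three i j v

theorem le_dotProduct_BC_mulVec {ρ : ℝ} (hρ : 0 ≤ ρ) (i j : ℤ) (v : Fin 2 → ℝ) :
    24 * π ^ 2 * ((i : ℝ) ^ 2 + i * j + (j : ℝ) ^ 2) * (v ⬝ᵥ v) ≤ v ⬝ᵥ BC ρ i j *ᵥ v := by
  rw [dotProduct_BC_mulVec]
  exact le_add_of_nonneg_left (by positivity)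

/-- coercivity of the continuum Schur complement B_C:
for every ρ* > 0 there is C > 0 depending only on ρ* such that for all
integers i', j' and every v ∈ ℝ², v·(B_C[i',j'] v) ≥ C((i')² + (j')²)|v|²;
in particular the smallest eigenvalue of B_C[i',j'] is at least
C((i')² + (j')²). -/
theorem coercive_BC (ρ : ℝ) (hρ : 0 < ρ) :
    ∃ C > 0, ∀ i j : ℤ, ∀ v : Fin 2 → ℝ,
      C * ((i:ℝ)^2 + (j:ℝ)^2) * (v ⬝ᵥ v) ≤ v ⬝ᵥ (BC ρ i j).mulVec v := by
  refine ⟨12 * π ^ 2, by positivity, fun i j v => ?_⟩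
  have hv : 0 ≤ v ⬝ᵥ v := dotProduct_self_star_nonneg v
  calc 12 * π ^ 2 * ((i : ℝ) ^ 2 + (j : ℝ) ^ 2) * (v ⬝ᵥ v)
      ≤ 24 * π ^ 2 * ((i : ℝ) ^ 2 + i * j + (j : ℝ) ^ 2) * (v ⬝ᵥ v) := by
        refine mul_le_mul_of_nonneg_right ?_ hv
        linarith [mul_nonneg (sq_nonneg π) (sq_nonneg ((i : ℝ) + j))]
    _ ≤ v ⬝ᵥ BC ρ i j *ᵥ v := le_dotProduct_BC_mulVec hρ.le i j v
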